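/- arXiv:2510.09959 — 3 statements merged into one kernel-verified Lean document; each statement's English description precedes it below -/
import Mathlib

section
/- Let A be an n×n real symmetric matrix with nonnegative entries, and let B, B̂ be k×n real matrices with nonnegative entries, with all entries of B̂ strictly positive. Then tr(B A Bᵀ B A Bᵀ) ≤ Σ_{l,i} (B̂ A B̂ᵀ B̂ A)_{li} · B_{li}^4 / B̂_{li}^3. -/
open Matrix

private lemma amgm4' {a b c d : ℝ} (ha : 0 ≤ a) (hb : 0 ≤ b) (hc : 0 ≤ c) (hd : 0 ≤ d) :
    a * b * c * d ≤ (a^4 + b^4 + c^4 + d^4) / 4 := by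
  nlinarith [sq_nonneg (a*b - c*d), sq_nonneg (a^2 - b^2), sq_nonneg (c^2 - d^2),
    mul_nonneg ha hb, mul_nonneg hc hd, sq_nonneg (a*b + c*d)]

theorem quartic_trace_majorization {k n : ℕ}
    (A : Matrix (Fin n) (Fin n) ℝ) (hA : A.IsSymm) (hApos : ∀ i j, 0 ≤ A i j)
    (B Bhat : Matrix (Fin k) (Fin n) ℝ)
    (hB : ∀ l i, 0 ≤ B l i) (hBhat : ∀ l i, 0 < Bhat l i) :
    Matrix.trace (B * A * Bᵀ * B * A * Bᵀ) ≤
      ∑ l, ∑ i, (Bhat * A * Bhatᵀ * Bhat * A) l i * (B l i) ^ 4 / (Bhat l i) ^ 3 := by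
  have hX : ∀ l i, 0 ≤ B l i / Bhat l i := fun l i => div_nonneg (hB l i) (hBhat l i).le
  have hBX : ∀ l i, B l i = Bhat l i * (B l i / Bhat l i) := fun l i => by
    rw [mul_comm, div_mul_cancel₀ _ (hBhat l i).ne']
  -- the four quartic summand shapes
  let g1 : Fin k × Fin n × Fin n × Fin k × Fin n × Fin n → ℝ := fun t =>
    Bhat t.1 t.2.2.2.2.2 * A t.2.2.2.2.2 t.2.2.2.2.1 * Bhat t.2.2.2.1 t.2.2.2.2.1 *
      Bhat t.2.2.2.1 t.2.2.1 * A t.2.2.1 t.2.1 * Bhat t.1 t.2.1 *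
      (B t.1 t.2.2.2.2.2 / Bhat t.1 t.2.2.2.2.2)^4
  let g2 : Fin k × Fin n × Fin n × Fin k × Fin n × Fin n → ℝ := fun t =>
    Bhat t.1 t.2.2.2.2.2 * A t.2.2.2.2.2 t.2.2.2.2.1 * Bhat t.2.2.2.1 t.2.2.2.2.1 *
      Bhat t.2.2.2.1 t.2.2.1 * A t.2.2.1 t.2.1 * Bhat t.1 t.2.1 *
      (B t.2.2.2.1 t.2.2.2.2.1 / Bhat t.2.2.2.1 t.2.2.2.2.1)^4
  let g3 : Fin k × Fin n × Fin n × Fin k × Fin n × Fin n → ℝ := fun t =>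
    Bhat t.1 t.2.2.2.2.2 * A t.2.2.2.2.2 t.2.2.2.2.1 * Bhat t.2.2.2.1 t.2.2.2.2.1 *
      Bhat t.2.2.2.1 t.2.2.1 * A t.2.2.1 t.2.1 * Bhat t.1 t.2.1 *
      (B t.2.2.2.1 t.2.2.1 / Bhat t.2.2.2.1 t.2.2.1)^4
  let g4 : Fin k × Fin n × Fin n × Fin k × Fin n × Fin n → ℝ := fun t =>
    Bhat t.1 t.2.2.2.2.2 * A t.2.2.2.2.2 t.2.2.2.2.1 * Bhat t.2.2.2.1 t.2.2.2.2.1 *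
      Bhat t.2.2.2.1 t.2.2.1 * A t.2.2.1 t.2.1 * Bhat t.1 t.2.1 *
      (B t.1 t.2.1 / Bhat t.1 t.2.1)^4
  -- trace expansion
  have h1 : Matrix.trace (B * A * Bᵀ * B * A * Bᵀ) =
      ∑ t : Fin k × Fin n × Fin n × Fin k × Fin n × Fin n,
        B t.1 t.2.2.2.2.2 * A t.2.2.2.2.2 t.2.2.2.2.1 * B t.2.2.2.1 t.2.2.2.2.1 *
        B t.2.2.2.1 t.2.2.1 * A t.2.2.1 t.2.1 * B t.1 t.2.1 := by
    simp only [Matrix.trace, Matrix.diag, Matrix.mul_apply, Matrix.transpose_apply,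
      Finset.sum_mul, Finset.mul_sum, Fintype.sum_prod_type]
  -- RHS expansion
  have h2 : (∑ l, ∑ i, (Bhat * A * Bhatᵀ * Bhat * A) l i * (B l i) ^ 4 / (Bhat l i) ^ 3) =
      ∑ t : Fin k × Fin n × Fin n × Fin k × Fin n × Fin n, g4 t := by
    simp only [g4, Matrix.mul_apply, Matrix.transpose_apply, Finset.sum_mul, Finset.mul_sum,
      Finset.sum_div, Fintype.sum_prod_type]
    refine Finset.sum_congr rfl fun l _ => Finset.sum_congr rfl fun q _ =>
      Finset.sum_congr rfl fun p _ => Finset.sum_congr rfl fun m _ =>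
      Finset.sum_congr rfl fun j _ => Finset.sum_congr rfl fun i _ => ?_
    have h := (hBhat l q).ne'
    field_simp
  have e1 : (∑ t : Fin k × Fin n × Fin n × Fin k × Fin n × Fin n, g1 t) = ∑ t, g4 t := by
    refine Fintype.sum_bijective
      (fun t : Fin k × Fin n × Fin n × Fin k × Fin n × Fin n =>
        (t.1, t.2.2.2.2.2, t.2.2.2.2.1, t.2.2.2.1, t.2.2.1, t.2.1))
      (Function.Involutive.bijective fun t => rfl) _ _ fun t => ?_
    simp only [g1, g4]
    rw [hA.apply t.2.2.2.2.2 t.2.2.2.2.1, hA.apply t.2.2.1 t.2.1]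
    ring
  have e2 : (∑ t : Fin k × Fin n × Fin n × Fin k × Fin n × Fin n, g2 t) = ∑ t, g4 t := by
    refine Fintype.sum_bijective
      (fun t : Fin k × Fin n × Fin n × Fin k × Fin n × Fin n =>
        (t.2.2.2.1, t.2.2.2.2.1, t.2.2.2.2.2, t.1, t.2.1, t.2.2.1))
      (Function.Involutive.bijective fun t => rfl) _ _ fun t => ?_
    simp only [g2, g4]
    ring
  have e3 : (∑ t : Fin k × Fin n × Fin n × Fin k × Fin n × Fin n, g3 t) = ∑ t, g4 t := by
    refine Fintype.sum_bijective
      (fun t : Fin k × Fin n × Fin n × Fin k × Fin n × Fin n =>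
        (t.2.2.2.1, t.2.2.1, t.2.1, t.1, t.2.2.2.2.2, t.2.2.2.2.1))
      (Function.Involutive.bijective fun t => rfl) _ _ fun t => ?_
    simp only [g3, g4]
    rw [hA.apply t.2.2.2.2.2 t.2.2.2.2.1, hA.apply t.2.2.1 t.2.1]
    ring
  have hbound : ∀ t : Fin k × Fin n × Fin n × Fin k × Fin n × Fin n,
      B t.1 t.2.2.2.2.2 * A t.2.2.2.2.2 t.2.2.2.2.1 * B t.2.2.2.1 t.2.2.2.2.1 *
        B t.2.2.2.1 t.2.2.1 * A t.2.2.1 t.2.1 * B t.1 t.2.1 ≤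
      (g1 t + g2 t + g3 t + g4 t) / 4 := by
    rintro ⟨l, q, p, m, j, i⟩
    simp only [g1, g2, g3, g4]
    have hc : (0:ℝ) ≤ Bhat l i * A i j * Bhat m j * Bhat m p * A p q * Bhat l q :=
      mul_nonneg (mul_nonneg (mul_nonneg (mul_nonneg (mul_nonneg (hBhat l i).le (hApos i j))
        (hBhat m j).le) (hBhat m p).le) (hApos p q)) (hBhat l q).le
    calc B l i * A i j * B m j * B m p * A p q * B l q
        = (Bhat l i * A i j * Bhat m j * Bhat m p * A p q * Bhat l q) *
          (B l i / Bhat l i * (B m j / Bhat m j) * (B m p / Bhat m p) * (B l q / Bhat l q)) := by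
          rw [hBX l i, hBX m j, hBX m p, hBX l q]
          have h1 := (hBhat l i).ne'
          have h2 := (hBhat m j).ne'
          have h3 := (hBhat m p).ne'
          have h4 := (hBhat l q).ne'
          field_simp
      _ ≤ (Bhat l i * A i j * Bhat m j * Bhat m p * A p q * Bhat l q) *
          ((B l i / Bhat l i)^4 + (B m j / Bhat m j)^4 + (B m p / Bhat m p)^4 +
            (B l q / Bhat l q)^4) / 4 := by
          rw [mul_div_assoc]
          exact mul_le_mul_of_nonneg_left (amgm4' (hX l i) (hX m j) (hX m p) (hX l q)) hc
      _ = _ := by ring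
  calc Matrix.trace (B * A * Bᵀ * B * A * Bᵀ)
      = ∑ t : Fin k × Fin n × Fin n × Fin k × Fin n × Fin n,
        B t.1 t.2.2.2.2.2 * A t.2.2.2.2.2 t.2.2.2.2.1 * B t.2.2.2.1 t.2.2.2.2.1 *
        B t.2.2.2.1 t.2.2.1 * A t.2.2.1 t.2.1 * B t.1 t.2.1 := h1
    _ ≤ ∑ t : Fin k × Fin n × Fin n × Fin k × Fin n × Fin n, (g1 t + g2 t + g3 t + g4 t) / 4 :=
        Finset.sum_le_sum fun t _ => hbound t
    _ = ((∑ t : Fin k × Fin n × Fin n × Fin k × Fin n × Fin n, g1 t) + (∑ t, g2 t) +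
          (∑ t, g3 t) + (∑ t, g4 t)) / 4 := by
        rw [← Finset.sum_div, ← Finset.sum_add_distrib, ← Finset.sum_add_distrib,
          ← Finset.sum_add_distrib]
    _ = ∑ t : Fin k × Fin n × Fin n × Fin k × Fin n × Fin n, g4 t := by
        rw [e1, e2, e3]; ring
    _ = _ := h2.symm
end

section
/- Let A be an n×n real symmetric matrix with nonnegative entries, and let B, B̂ be k×n real matrices with nonnegative entries, with all entries of B̂ strictly positive. Then tr(B A Bᵀ) ≤ Σ_{l,i} (B̂ A)_{li} · (B_{li}^4 + B̂_{li}^4) / (2 B̂_{li}^3). -/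
open Matrix

theorem quadratic_trace_majorization {k n : ℕ}
    (A : Matrix (Fin n) (Fin n) ℝ) (hA : A.IsSymm) (hApos : ∀ i j, 0 ≤ A i j)
    (B Bhat : Matrix (Fin k) (Fin n) ℝ)
    (hB : ∀ l i, 0 ≤ B l i) (hBhat : ∀ l i, 0 < Bhat l i) :
    Matrix.trace (B * A * Bᵀ) ≤
      ∑ l, ∑ i, (Bhat * A) l i * ((B l i) ^ 4 + (Bhat l i) ^ 4) / (2 * (Bhat l i) ^ 3) := by
  have hsym : ∀ i j, A i j = A j i := by
    intro i j
    have := congrFun (congrFun hA j) i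
    simpa [Matrix.transpose_apply] using this
  have hBApos : ∀ l i, 0 ≤ (Bhat * A) l i := by
    intro l i
    rw [Matrix.mul_apply]
    exact Finset.sum_nonneg fun j _ => mul_nonneg (hBhat l j).le (hApos j i)
  have expand : Matrix.trace (B * A * Bᵀ) = ∑ l, ∑ x, ∑ j, B l j * A j x * B l x := by
    simp [Matrix.trace, Matrix.mul_apply, Matrix.diag, Finset.sum_mul]
  have middle : Matrix.trace (B * A * Bᵀ) ≤
      ∑ l, ∑ i, (Bhat * A) l i * (B l i) ^ 2 / Bhat l i := by
    rw [expand]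
    refine Finset.sum_le_sum fun l _ => ?_
    have hsplit1 : (∑ x, ∑ j, A j x * (Bhat l x * B l j ^ 2 / Bhat l j) / 2)
        = ∑ i, (Bhat * A) l i * (B l i) ^ 2 / Bhat l i / 2 := by
      rw [Finset.sum_comm]
      refine Finset.sum_congr rfl fun j _ => ?_
      rw [Matrix.mul_apply, Finset.sum_mul, Finset.sum_div, Finset.sum_div]
      refine Finset.sum_congr rfl fun x _ => ?_
      rw [hsym j x]
      ring
    have hsplit2 : (∑ x, ∑ j, A j x * (Bhat l j * B l x ^ 2 / Bhat l x) / 2)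
        = ∑ i, (Bhat * A) l i * (B l i) ^ 2 / Bhat l i / 2 := by
      refine Finset.sum_congr rfl fun x _ => ?_
      rw [Matrix.mul_apply, Finset.sum_mul, Finset.sum_div, Finset.sum_div]
      refine Finset.sum_congr rfl fun j _ => ?_
      ring
    calc ∑ x, ∑ j, B l j * A j x * B l x
        ≤ ∑ x, ∑ j, (A j x * (Bhat l x * B l j ^ 2 / Bhat l j) / 2
            + A j x * (Bhat l j * B l x ^ 2 / Bhat l x) / 2) := by
          refine Finset.sum_le_sum fun x _ => Finset.sum_le_sum fun j _ => ?_
          have hpj := hBhat l j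
          have hpx := hBhat l x
          have key : B l j * B l x ≤
              (Bhat l x * B l j ^ 2 / Bhat l j + Bhat l j * B l x ^ 2 / Bhat l x) / 2 := by
            rw [div_add_div _ _ hpj.ne' hpx.ne', div_div, le_div_iff₀ (by positivity)]
            nlinarith [sq_nonneg (B l j * Bhat l x - B l x * Bhat l j)]
          have := mul_le_mul_of_nonneg_left key (hApos j x)
          calc B l j * A j x * B l x = A j x * (B l j * B l x) := by ring
            _ ≤ A j x * ((Bhat l x * B l j ^ 2 / Bhat l j
                  + Bhat l j * B l x ^ 2 / Bhat l x) / 2) := this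
            _ = A j x * (Bhat l x * B l j ^ 2 / Bhat l j) / 2
                  + A j x * (Bhat l j * B l x ^ 2 / Bhat l x) / 2 := by ring
      _ = (∑ x, ∑ j, A j x * (Bhat l x * B l j ^ 2 / Bhat l j) / 2)
            + ∑ x, ∑ j, A j x * (Bhat l j * B l x ^ 2 / Bhat l x) / 2 := by
          rw [← Finset.sum_add_distrib]
          exact Finset.sum_congr rfl fun x _ => Finset.sum_add_distrib
      _ = ∑ i, (Bhat * A) l i * (B l i) ^ 2 / Bhat l i := by
          rw [hsplit1, hsplit2, ← Finset.sum_add_distrib]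
          exact Finset.sum_congr rfl fun i _ => by ring
  refine middle.trans ?_
  refine Finset.sum_le_sum fun l _ => Finset.sum_le_sum fun i _ => ?_
  have hp := hBhat l i
  have hc := hBApos l i
  rw [div_le_div_iff₀ hp (by positivity)]
  nlinarith [mul_nonneg (mul_nonneg hc (sq_nonneg (B l i ^ 2 - Bhat l i ^ 2))) hp.le]
end

section
/- Let A be an n×n real symmetric matrix with nonnegative entries, and let B, B̂ be k×n matrices with strictly positive entries. Then tr(B A Bᵀ) ≥ Σ_{l,i,j} A_{ij} · B̂_{li} · B̂_{lj} · (1 + ln(B_{li} B_{lj} / (B̂_{li} B̂_{lj}))). -/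
open Matrix

theorem log_trace_lower_bound {k n : ℕ}
    (A : Matrix (Fin n) (Fin n) ℝ) (hA : A.IsSymm) (hApos : ∀ i j, 0 ≤ A i j)
    (B Bhat : Matrix (Fin k) (Fin n) ℝ)
    (hB : ∀ l i, 0 < B l i) (hBhat : ∀ l i, 0 < Bhat l i) :
    ∑ l, ∑ i, ∑ j, A i j * Bhat l i * Bhat l j *
        (1 + Real.log (B l i * B l j / (Bhat l i * Bhat l j))) ≤
      Matrix.trace (B * A * Bᵀ) := by
  have htr : Matrix.trace (B * A * Bᵀ) = ∑ l, ∑ i, ∑ j, A i j * B l i * B l j := by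
    simp [Matrix.trace, Matrix.mul_apply, Matrix.diag, Finset.mul_sum, Finset.sum_mul]
    apply Finset.sum_congr rfl; intro l _
    apply Finset.sum_congr rfl; intro i _
    apply Finset.sum_congr rfl; intro j _
    rw [← hA.apply j i]; ring
  rw [htr]
  refine Finset.sum_le_sum fun l _ => Finset.sum_le_sum fun i _ => Finset.sum_le_sum fun j _ => ?_
  have hz : 0 < B l i * B l j / (Bhat l i * Bhat l j) :=
    div_pos (mul_pos (hB l i) (hB l j)) (mul_pos (hBhat l i) (hBhat l j))
  have hlog := Real.log_le_sub_one_of_pos hz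
  have h1 : 1 + Real.log (B l i * B l j / (Bhat l i * Bhat l j)) ≤
      B l i * B l j / (Bhat l i * Bhat l j) := by linarith
  have hBh : 0 < Bhat l i * Bhat l j := mul_pos (hBhat l i) (hBhat l j)
  have key : Bhat l i * Bhat l j * (1 + Real.log (B l i * B l j / (Bhat l i * Bhat l j)))
      ≤ B l i * B l j := by
    calc Bhat l i * Bhat l j * (1 + Real.log (B l i * B l j / (Bhat l i * Bhat l j)))
        ≤ Bhat l i * Bhat l j * (B l i * B l j / (Bhat l i * Bhat l j)) := by
          exact mul_le_mul_of_nonneg_left h1 hBh.le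
      _ = B l i * B l j := by rw [mul_div_assoc']; exact mul_div_cancel_left₀ _ hBh.ne'
  calc A i j * Bhat l i * Bhat l j * (1 + Real.log (B l i * B l j / (Bhat l i * Bhat l j)))
      = A i j * (Bhat l i * Bhat l j * (1 + Real.log (B l i * B l j / (Bhat l i * Bhat l j)))) := by ring
    _ ≤ A i j * (B l i * B l j) := mul_le_mul_of_nonneg_left key (hApos i j)
    _ = A i j * B l i * B l j := by ring
end
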